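/- arXiv:2501.02644 — 2 statements merged into one kernel-verified Lean document; each statement's English description precedes it below -/
import Mathlib

section
/- Let q ≥ 1 and let s₀, …, s_{q+1} ∈ ℝ^N. Let Y be a real N×q matrix such that Yᵀ·Δ²S is invertible, and let γ₀, …, γ_q ∈ ℝ satisfy ∑_{j=0}^{q} γⱼ = 1 and Yᵀ (∑_{j=0}^{q} γⱼ Δsⱼ) = 0. Then ∑_{j=0}^{q} γⱼ sⱼ = s₀ − ΔS (Yᵀ Δ²S)⁻¹ Yᵀ Δs₀, where ΔS is the N×q matrix with columns Δs₀, …, Δs_{q−1} and Δ²S is the N×q matrix with columns Δ²s₀, …, Δ²s_{q−1}. -/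
open Matrix Finset

/-- First forward differences `Δsⱼ = s_{j+1} − sⱼ` (for `0 ≤ j ≤ q`) of a finite sequence
of vectors `s₀, …, s_{q+1}` in `ℝ^N`. -/
def forwardDiff {N q : ℕ} (s : Fin (q + 2) → Fin N → ℝ) (j : Fin (q + 1)) : Fin N → ℝ :=
  fun n => s j.succ n - s j.castSucc n

/-- `ΔS`: the `N × q` matrix whose columns are `Δs₀, …, Δs_{q−1}`. -/
def DSq {N q : ℕ} (s : Fin (q + 2) → Fin N → ℝ) : Matrix (Fin N) (Fin q) ℝ :=
  Matrix.of fun n j => forwardDiff s j.castSucc n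

/-- `Δ²S`: the `N × q` matrix whose columns are the second forward differences
`Δ²s₀, …, Δ²s_{q−1}`, where `Δ²sⱼ = Δs_{j+1} − Δsⱼ`. -/
def D2Sq {N q : ℕ} (s : Fin (q + 2) → Fin N → ℝ) : Matrix (Fin N) (Fin q) ℝ :=
  Matrix.of fun n j => forwardDiff s j.succ n - forwardDiff s j.castSucc n

/-- Abel-type summation identity used for the extrapolation formula. -/
lemma abel_aux (q : ℕ) (γ f : ℕ → ℝ) :
    ∑ j ∈ Finset.range (q+1), γ j * f j =
      (∑ j ∈ Finset.range (q+1), γ j) * f 0 +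
      ∑ i ∈ Finset.range q, (∑ j ∈ Finset.Ioc i q, γ j) * (f (i+1) - f i) := by
  induction q with
  | zero => simp
  | succ q ih =>
    rw [Finset.sum_range_succ (f := fun j => γ j * f j), ih]
    rw [Finset.sum_range_succ (f := fun i => (∑ j ∈ Finset.Ioc i (q+1), γ j) * (f (i+1) - f i))]
    rw [Finset.sum_range_succ (f := γ) (n := q+1), Finset.sum_range_succ (f := γ) (n := q)]
    have h1 : ∀ i ∈ Finset.range q,
        (∑ j ∈ Finset.Ioc i (q+1), γ j) * (f (i+1) - f i)
          = (∑ j ∈ Finset.Ioc i q, γ j) * (f (i+1) - f i) + γ (q+1) * (f (i+1) - f i) := by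
      intro i hi
      have hi' := Finset.mem_range.mp hi
      rw [Finset.sum_Ioc_succ_top (by omega : i ≤ q)]
      ring
    rw [Finset.sum_congr rfl h1, Finset.sum_add_distrib, ← Finset.mul_sum,
      Finset.sum_range_sub f]
    have h2 : ∑ j ∈ Finset.Ioc q (q+1), γ j = γ (q+1) := by
      simp [Finset.sum_Ioc_succ_top (le_refl q)]
    rw [h2]
    ring

/-- If `Yᵀ Δ²S` is invertible and the weights `γ₀, …, γ_q` satisfy `∑ γⱼ = 1` and
`Yᵀ (∑ γⱼ Δsⱼ) = 0`, then the extrapolated approximation satisfies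
`∑ γⱼ sⱼ = s₀ − ΔS (Yᵀ Δ²S)⁻¹ Yᵀ Δs₀`. -/
theorem extrapolation_matrix_form (N q : ℕ) (hq : 1 ≤ q)
    (s : Fin (q + 2) → Fin N → ℝ)
    (Y : Matrix (Fin N) (Fin q) ℝ)
    (hY : IsUnit (Yᵀ * D2Sq s))
    (γ : Fin (q + 1) → ℝ)
    (hsum : ∑ j, γ j = 1)
    (horth : Yᵀ *ᵥ (∑ j : Fin (q + 1), γ j • forwardDiff s j) = 0) :
    ∑ j : Fin (q + 1), γ j • s j.castSucc =
      s 0 - DSq s *ᵥ ((Yᵀ * D2Sq s)⁻¹ *ᵥ (Yᵀ *ᵥ forwardDiff s 0)) := by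
  classical
  set γ' : ℕ → ℝ := fun m => if h : m < q + 1 then γ ⟨m, h⟩ else 0 with hγ'
  set ξ : Fin q → ℝ := fun i => ∑ j ∈ Finset.Ioc i.val q, γ' j with hξdef
  have hsum' : ∑ j ∈ Finset.range (q+1), γ' j = 1 := by
    rw [← Fin.sum_univ_eq_sum_range]
    rw [← hsum]
    exact Finset.sum_congr rfl fun j _ => by simp [hγ', Fin.is_le j]
  -- Key identity A : weighted sum of forward differences
  have keyA : ∑ j : Fin (q + 1), γ j • forwardDiff s j = forwardDiff s 0 + D2Sq s *ᵥ ξ := by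
    funext n
    set G : ℕ → ℝ := fun m => if h : m < q + 1 then forwardDiff s ⟨m, h⟩ n else 0 with hG
    have habel := abel_aux q γ' G
    rw [hsum', one_mul] at habel
    have hl : ∑ j ∈ Finset.range (q+1), γ' j * G j
        = (∑ j : Fin (q + 1), γ j • forwardDiff s j) n := by
      rw [← Fin.sum_univ_eq_sum_range, Finset.sum_apply]
      exact Finset.sum_congr rfl fun j _ => by simp [hγ', hG, Fin.is_le j]
    have hr : ∑ i ∈ Finset.range q, (∑ j ∈ Finset.Ioc i q, γ' j) * (G (i+1) - G i)
        = (D2Sq s *ᵥ ξ) n := by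
      rw [← Fin.sum_univ_eq_sum_range (f := fun i => (∑ j ∈ Finset.Ioc i q, γ' j) * (G (i+1) - G i))]
      simp only [mulVec, dotProduct]
      refine Finset.sum_congr rfl fun i _ => ?_
      have h1 : (i : ℕ) + 1 < q + 1 := by omega
      have h2 : (i : ℕ) < q + 1 := by omega
      rw [hG]
      simp only [dif_pos h1, dif_pos h2]
      rw [mul_comm]
      congr 1
    have hG0 : G 0 = forwardDiff s 0 n := by
      rw [hG]; simp
    rw [hl, hr, hG0] at habel
    rw [habel, Pi.add_apply]
  -- Key identity B : weighted sum of the s's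
  have keyB : ∑ j : Fin (q + 1), γ j • s j.castSucc = s 0 + DSq s *ᵥ ξ := by
    funext n
    set F : ℕ → ℝ := fun m => if h : m < q + 2 then s ⟨m, h⟩ n else 0 with hF
    have habel := abel_aux q γ' F
    rw [hsum', one_mul] at habel
    have hl : ∑ j ∈ Finset.range (q+1), γ' j * F j
        = (∑ j : Fin (q + 1), γ j • s j.castSucc) n := by
      rw [← Fin.sum_univ_eq_sum_range, Finset.sum_apply]
      refine Finset.sum_congr rfl fun j _ => ?_
      have h1 : (j : ℕ) < q + 1 := j.isLt
      have h2 : (j : ℕ) < q + 2 := by omega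
      simp only [hγ', hF, dif_pos h1, dif_pos h2, Pi.smul_apply, smul_eq_mul]
      congr 1
    have hr : ∑ i ∈ Finset.range q, (∑ j ∈ Finset.Ioc i q, γ' j) * (F (i+1) - F i)
        = (DSq s *ᵥ ξ) n := by
      rw [← Fin.sum_univ_eq_sum_range (f := fun i => (∑ j ∈ Finset.Ioc i q, γ' j) * (F (i+1) - F i))]
      simp only [mulVec, dotProduct]
      refine Finset.sum_congr rfl fun i _ => ?_
      have h1 : (i : ℕ) + 1 < q + 2 := by omega
      have h2 : (i : ℕ) < q + 2 := by omega
      rw [hF]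
      simp only [dif_pos h1, dif_pos h2]
      rw [mul_comm]
      congr 1
    have hF0 : F 0 = s 0 n := by
      rw [hF]; simp
    rw [hl, hr, hF0] at habel
    rw [habel, Pi.add_apply]
  -- Solve for ξ
  have hdet : IsUnit (Yᵀ * D2Sq s).det := (Matrix.isUnit_iff_isUnit_det _).mp hY
  have h1 : Yᵀ *ᵥ forwardDiff s 0 + (Yᵀ * D2Sq s) *ᵥ ξ = 0 := by
    rw [keyA] at horth
    rwa [Matrix.mulVec_add, Matrix.mulVec_mulVec] at horth
  have h2 : (Yᵀ * D2Sq s) *ᵥ ξ = -(Yᵀ *ᵥ forwardDiff s 0) :=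
    eq_neg_of_add_eq_zero_right h1
  have hxi : ξ = -((Yᵀ * D2Sq s)⁻¹ *ᵥ (Yᵀ *ᵥ forwardDiff s 0)) := by
    calc ξ = (Yᵀ * D2Sq s)⁻¹ *ᵥ ((Yᵀ * D2Sq s) *ᵥ ξ) := by
            rw [Matrix.mulVec_mulVec, Matrix.nonsing_inv_mul _ hdet, Matrix.one_mulVec]
      _ = -((Yᵀ * D2Sq s)⁻¹ *ᵥ (Yᵀ *ᵥ forwardDiff s 0)) := by
            rw [h2, Matrix.mulVec_neg]
  rw [keyB, hxi, Matrix.mulVec_neg, ← sub_eq_add_neg]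
end

section
/- Let q ≥ 1 and let s₀, …, s_{q+1} ∈ ℝ^N. Let Y be a real N×q matrix such that Yᵀ·Δ²S is invertible, and let γ₀, …, γ_q ∈ ℝ satisfy ∑_{j=0}^{q} γⱼ = 1 and Yᵀ (∑_{j=0}^{q} γⱼ Δsⱼ) = 0. Then the generalized residual satisfies ∑_{j=0}^{q} γⱼ s_{j+1} − ∑_{j=0}^{q} γⱼ sⱼ = ∑_{j=0}^{q} γⱼ Δsⱼ = Δs₀ − Δ²S (Yᵀ Δ²S)⁻¹ Yᵀ Δs₀, where Δ²S is the N×q matrix with columns Δ²s₀, …, Δ²s_{q−1}. -/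
/-!
Summation by parts writes `∑ γⱼ Δsⱼ` as `(∑ γⱼ) Δs₀ + Δ²S c` with tail sums `cᵢ = ∑_{j > i} γⱼ`,
so under `∑ γⱼ = 1` it is `Δs₀ + Δ²S c`. The orthogonality condition then reads
`Yᵀ Δs₀ + (Yᵀ Δ²S) c = 0`, which determines `c = -(Yᵀ Δ²S)⁻¹ Yᵀ Δs₀`.
-/

open Matrix Finset

namespace Fin

section AddCommMonoid

variable {R : Type*} [AddCommMonoid R] {q : ℕ}

def tailSum (γ : Fin (q + 1) → R) (i : Fin q) : R :=
  ∑ j, if i.castSucc < j then γ j else 0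

lemma tailSum_zero (γ : Fin (q + 2) → R) : tailSum γ 0 = ∑ j : Fin (q + 1), γ j.succ := by
  rw [tailSum, sum_univ_succ]
  simp [succ_pos]

lemma tailSum_succ (γ : Fin (q + 2) → R) (i : Fin q) :
    tailSum γ i.succ = tailSum (fun j => γ j.succ) i := by
  simp [tailSum, sum_univ_succ]

end AddCommMonoid

theorem sum_smul_eq_sum_smul_zero_add_tailSum_smul_sub {R M : Type*} [CommRing R]
    [AddCommGroup M] [Module R M] {q : ℕ} (γ : Fin (q + 1) → R) (d : Fin (q + 1) → M) :
    ∑ j, γ j • d j = (∑ j, γ j) • d 0 + ∑ i : Fin q, tailSum γ i • (d i.succ - d i.castSucc) := by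
  induction q with
  | zero => simp
  | succ q ih =>
    rw [sum_univ_succ, ih, sum_univ_succ (f := fun i => tailSum γ i • _), tailSum_zero]
    simp only [tailSum_succ, sum_univ_succ (f := γ), succ_zero_eq_one, castSucc_zero,
      ← succ_castSucc]
    module

end Fin

namespace Matrix

theorem mulVec_eq_sub_mulVec_nonsing_inv_mulVec {m n K : Type*} [Fintype m] [Fintype n]
    [DecidableEq n] [CommRing K] (Z : Matrix n m K) (D : Matrix m n K) (hZD : IsUnit (Z * D))
    (b : m → K) (c : n → K) (h : Z *ᵥ (b + D *ᵥ c) = 0) :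
    b + D *ᵥ c = b - D *ᵥ ((Z * D)⁻¹ *ᵥ (Z *ᵥ b)) := by
  have hc : (Z * D) *ᵥ c = -(Z *ᵥ b) := by
    rwa [mulVec_add, mulVec_mulVec, add_comm, add_eq_zero_iff_eq_neg] at h
  have : c = -((Z * D)⁻¹ *ᵥ (Z *ᵥ b)) := by
    rw [← mulVec_neg, ← hc, mulVec_mulVec,
      nonsing_inv_mul _ ((isUnit_iff_isUnit_det _).mp hZD), one_mulVec]
  rw [this, mulVec_neg, sub_eq_add_neg]

end Matrix

lemma D2Sq_mulVec_eq_sum {N q : ℕ} (s : Fin (q + 2) → Fin N → ℝ) (c : Fin q → ℝ) :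
    D2Sq s *ᵥ c = ∑ i, c i • (forwardDiff s i.succ - forwardDiff s i.castSucc) := by
  ext n
  simp [mulVec, dotProduct, D2Sq, Finset.sum_apply, mul_comm]

theorem generalized_residual_matrix_form_general (N q : ℕ)
    (s : Fin (q + 2) → Fin N → ℝ)
    (Y : Matrix (Fin N) (Fin q) ℝ)
    (hY : IsUnit (Yᵀ * D2Sq s))
    (γ : Fin (q + 1) → ℝ)
    (hsum : ∑ j, γ j = 1)
    (horth : Yᵀ *ᵥ (∑ j : Fin (q + 1), γ j • forwardDiff s j) = 0) :
    (∑ j : Fin (q + 1), γ j • s j.succ) - (∑ j : Fin (q + 1), γ j • s j.castSucc) =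
        ∑ j : Fin (q + 1), γ j • forwardDiff s j ∧
    ∑ j : Fin (q + 1), γ j • forwardDiff s j =
      forwardDiff s 0 - D2Sq s *ᵥ ((Yᵀ * D2Sq s)⁻¹ *ᵥ (Yᵀ *ᵥ forwardDiff s 0)) := by
  have hsplit : ∑ j, γ j • forwardDiff s j = forwardDiff s 0 + D2Sq s *ᵥ Fin.tailSum γ := by
    rw [Fin.sum_smul_eq_sum_smul_zero_add_tailSum_smul_sub, hsum, one_smul, D2Sq_mulVec_eq_sum]
  refine ⟨?_, ?_⟩
  · simp only [← sum_sub_distrib, ← smul_sub]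
    rfl
  · rw [hsplit] at horth ⊢
    exact mulVec_eq_sub_mulVec_nonsing_inv_mulVec _ _ hY _ _ horth

/-- If `Yᵀ Δ²S` is invertible and the weights `γ₀, …, γ_q` satisfy `∑ γⱼ = 1` and
`Yᵀ (∑ γⱼ Δsⱼ) = 0`, then the generalized residual satisfies
`∑ γⱼ s_{j+1} − ∑ γⱼ sⱼ = ∑ γⱼ Δsⱼ = Δs₀ − Δ²S (Yᵀ Δ²S)⁻¹ Yᵀ Δs₀`. -/
theorem generalized_residual_matrix_form (N q : ℕ) (hq : 1 ≤ q)
    (s : Fin (q + 2) → Fin N → ℝ)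
    (Y : Matrix (Fin N) (Fin q) ℝ)
    (hY : IsUnit (Yᵀ * D2Sq s))
    (γ : Fin (q + 1) → ℝ)
    (hsum : ∑ j, γ j = 1)
    (horth : Yᵀ *ᵥ (∑ j : Fin (q + 1), γ j • forwardDiff s j) = 0) :
    (∑ j : Fin (q + 1), γ j • s j.succ) - (∑ j : Fin (q + 1), γ j • s j.castSucc) =
        ∑ j : Fin (q + 1), γ j • forwardDiff s j ∧
    ∑ j : Fin (q + 1), γ j • forwardDiff s j =
      forwardDiff s 0 - D2Sq s *ᵥ ((Yᵀ * D2Sq s)⁻¹ *ᵥ (Yᵀ *ᵥ forwardDiff s 0)) :=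
  generalized_residual_matrix_form_general N q s Y hY γ hsum horth
end
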